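/- arXiv:2206.12338 — 2 statements merged into one kernel-verified Lean document; each statement's English description precedes it below -/
import Mathlib

section
/- Let N : ℕ, let Ω : Fin N → Type be a family of strategy sets with joint strategy space (Π i, Ω i), and let u : (Π i, Ω i) → (Fin N → ℝ) be a payoff function. Define the diegetic game system G : (Π i, Ω i) → Set (Π i, Ω i) by G ω = {ω' | ∀ i : Fin N, ∀ s : Ω i, u (Function.update ω i s) i ≤ u (Function.update ω i (ω' i)) i}. Then a strategy profile ω is a Nash equilibrium of (Ω, u) if and only if ω ∈ G ω. -/
/-- A strategy profile `ω` is a Nash equilibrium of `(Ω, u)` if no player can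
improve their own payoff by a unilateral deviation. -/
def IsNashEquilibrium {N : ℕ} {Ω : Fin N → Type}
    (u : (∀ i, Ω i) → (Fin N → ℝ)) (ω : ∀ i, Ω i) : Prop :=
  ∀ i : Fin N, ∀ s : Ω i, u (Function.update ω i s) i ≤ u ω i

/-- The diegetic game system `G` obtained by translating the normal-form game
`(N, Ω, u)`: each player uses argmax of their own payoff coordinate of the
continuation they receive. -/
def diegeticSystem {N : ℕ} {Ω : Fin N → Type}
    (u : (∀ i, Ω i) → (Fin N → ℝ)) (ω : ∀ i, Ω i) : Set (∀ i, Ω i) :=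
  {ω' | ∀ i : Fin N, ∀ s : Ω i,
    u (Function.update ω i s) i ≤ u (Function.update ω i (ω' i)) i}

theorem nash_iff_mem_diegeticSystem (N : ℕ) (Ω : Fin N → Type)
    (u : (∀ i, Ω i) → (Fin N → ℝ)) (ω : ∀ i, Ω i) :
    IsNashEquilibrium u ω ↔ ω ∈ diegeticSystem u ω := by
  simp [IsNashEquilibrium, diegeticSystem, Function.update_eq_self]
end

section
/- Let X, Y, Z, P, Ω, Ξ be types, and let g : Ω × X → Y and h : Ξ × Y → Z be parametric maps. Let k : (Ξ × Ω) × X → Z denote their Para-composite k ((ξ, ω), x) = h (ξ, g (ω, x)). Then for all ξ : Ξ, ω : Ω, x : X and u : Z → P: (i) applying the Nashator n_{Ξ,Ω} at (ξ, ω, first component of lift_P k ((ξ, ω), x, u)) yields exactly the pair (first component of lift_P h (ξ, g (ω, x), u), first component of lift_P g (ω, x, second component of lift_P h (ξ, g(ω,x), u))), namely (fun ξ' => u (h (ξ', g (ω, x))), fun ω' => u (h (ξ, g (ω', x)))); and (ii) the second (state) components agree: second component of lift_P k ((ξ,ω), x, u) = fun x' => u (h (ξ, g (ω, x'))). That is,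 the composite of the diegetic lifts of g and h equals the diegetic lift of their composite reparameterised along the Nashator n_{Ξ,Ω}, witnessing the lax 2-functoriality of Para(P^*). -/
/-- The Nashator `n_{X,Y}`. -/
def nashator {X Y P : Type} (x : X) (y : Y) (u : X × Y → P) :
    (X → P) × (Y → P) :=
  (fun x' => u (x', y), fun y' => u (x, y'))

/-- The diegetic lift of a parametric map `f : Ω × X → Y`: the backward part
of the parametric lens `Para(P^*)(f)`. -/
def liftP {Ω X Y P : Type} (f : Ω × X → Y) (ω : Ω) (x : X) (u : Y → P) :
    (Ω → P) × (X → P) :=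
  (fun ω' => u (f (ω', x)), fun x' => u (f (ω, x')))

theorem para_lift_lax_functoriality (X Y Z P Ω Ξ : Type)
    (g : Ω × X → Y) (h : Ξ × Y → Z)
    (k : (Ξ × Ω) × X → Z) (hk : k = fun p => h (p.1.1, g (p.1.2, p.2)))
    (ξ : Ξ) (ω : Ω) (x : X) (u : Z → P) :
    (nashator ξ ω (liftP k (ξ, ω) x u).1
        = ((liftP h ξ (g (ω, x)) u).1,
            (liftP g ω x (liftP h ξ (g (ω, x)) u).2).1)
      ∧ nashator ξ ω (liftP k (ξ, ω) x u).1
        = (fun ξ' => u (h (ξ', g (ω, x))), fun ω' => u (h (ξ, g (ω', x)))))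
    ∧ (liftP k (ξ, ω) x u).2 = fun x' => u (h (ξ, g (ω, x'))) := by
  subst hk; exact ⟨⟨rfl, rfl⟩, rfl⟩
end
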